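/- Let X_1, X_2, ... be i.i.d. random matrices taking values in S_d^{[0,1]} with mean M and variance V = E[(X_1 − M)²], and let α ∈ (0,1). For each n ≥ 2 define V̂_n = (1/(n(n−1))) Σ_{1 ≤ i < j ≤ n} (X_i − X_j)² and D_n = sqrt( 2·log(nd/((n−1)α)) / n ) · ( ‖V̂_n‖^{1/2} + min( sqrt( log(2nd/α) / (2n·‖V̂_n‖) ), (2·log(2nd/α)/n)^{1/4} ) ) + log(nd/((n−1)α))/(3n). Then sqrt(n)·D_n converges almost surely to sqrt( 2·log(d/α)·‖V‖ ) as n → ∞. -/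

import Mathlib

open MeasureTheory ProbabilityTheory Filter Matrix

/-- The largest eigenvalue of a real symmetric matrix. -/
noncomputable def lmax {d : ℕ} (A : Matrix (Fin d) (Fin d) ℝ) : ℝ := sSup (spectrum ℝ A)

/-- The smallest eigenvalue of a real symmetric matrix. -/
noncomputable def lmin {d : ℕ} (A : Matrix (Fin d) (Fin d) ℝ) : ℝ := sInf (spectrum ℝ A)

/-- The spectral norm (largest absolute value of eigenvalues) of a real symmetric matrix. -/
noncomputable def specNorm {d : ℕ} (A : Matrix (Fin d) (Fin d) ℝ) : ℝ := max (lmax A) (-(lmin A))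

/-- The Loewner partial order `A ⪯ B`, i.e. `B - A` is positive semidefinite. -/
def LoewnerLE {d : ℕ} (A B : Matrix (Fin d) (Fin d) ℝ) : Prop := (B - A).PosSemidef

/-- `A ∈ S_d^{[0,1]}`: `A` is symmetric with all eigenvalues in `[0,1]`. -/
def memSd01 {d : ℕ} (A : Matrix (Fin d) (Fin d) ℝ) : Prop := A.PosSemidef ∧ (1 - A).PosSemidef

instance matMS {d : ℕ} : MeasurableSpace (Matrix (Fin d) (Fin d) ℝ) := MeasurableSpace.pi

/-- Entrywise expectation of a random matrix. -/
noncomputable def mIntegral {d : ℕ} {Ω : Type*} [MeasurableSpace Ω] (μ : Measure Ω)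
    (X : Ω → Matrix (Fin d) (Fin d) ℝ) : Matrix (Fin d) (Fin d) ℝ :=
  fun i j => ∫ ω, X ω i j ∂μ

/-- Entrywise conditional expectation of a random matrix given a sub-σ-algebra `m`. -/
noncomputable def mCondExp {d : ℕ} {Ω : Type*} {m0 : MeasurableSpace Ω} (m : MeasurableSpace Ω)
    (μ : @Measure Ω m0) (X : Ω → Matrix (Fin d) (Fin d) ℝ) : Ω → Matrix (Fin d) (Fin d) ℝ :=
  fun ω i j => (μ[fun ω' => X ω' i j | m]) ω

/-- Entrywise integrability of a random matrix. -/
def mIntegrable {d : ℕ} {Ω : Type*} [MeasurableSpace Ω] (μ : Measure Ω)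
    (X : Ω → Matrix (Fin d) (Fin d) ℝ) : Prop :=
  ∀ i j, Integrable (fun ω => X ω i j) μ

/-- Entrywise measurability of a random matrix with respect to a σ-algebra `m`. -/
def mMeasurable {d : ℕ} {Ω : Type*} (m : MeasurableSpace Ω)
    (X : Ω → Matrix (Fin d) (Fin d) ℝ) : Prop :=
  ∀ i j, Measurable[m] (fun ω => X ω i j)

/-- The CGF of a centered standard exponential distribution, `ψ_E(γ) = -log(1-γ) - γ`. -/
noncomputable def psiE (g : ℝ) : ℝ := -Real.log (1 - g) - g

/-- The matrix exponential of a real symmetric matrix. -/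
noncomputable def mexp {d : ℕ} (A : Matrix (Fin d) (Fin d) ℝ) : Matrix (Fin d) (Fin d) ℝ :=
  NormedSpace.exp A

open Topology Finset

/-!
Shifting every `X_i` by `M` does not change `V̂_n`, which equals
`n/(n-1) · (mean of (X_i - M)² - (mean of (X_i - M))²)`. The entries of the `X_i` are bounded,
so the strong law of large numbers applies entrywise and gives `V̂_n → V - 0² = V` almost
surely. On symmetric matrices `specNorm` is the operator norm (the spectral radius of a
self-adjoint operator is its norm), hence continuous, so `‖V̂_n‖ → ‖V‖`. What remains is
deterministic: `log(nd/((n-1)α)) → log(d/α)`, the `min` term is at most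
`(2 log(2nd/α)/n)^{1/4} → 0`, and `√n` times the last term is `O(1/√n)`.
-/

theorem Matrix.PosSemidef.two_mul_abs_apply_le {n : Type*} {A : Matrix n n ℝ} (hA : A.PosSemidef)
    (i j : n) : 2 * |A i j| ≤ A i i + A j j := by
  have hquad : ∀ s : ℝ, 0 ≤ A i i + s * (A i j + A j i) + s ^ 2 * A j j := fun s => by
    have h := (hA.submatrix ![i, j]).dotProduct_mulVec_nonneg ![1, s]
    simp [dotProduct, mulVec, Fin.sum_univ_two] at h
    linarith
  have hsymm : A j i = A i j := hA.isHermitian.apply i j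
  rw [hsymm] at hquad
  rcases abs_cases (A i j) with ⟨h, -⟩ | ⟨h, -⟩ <;> rw [h] <;> linarith [hquad 1, hquad (-1)]

theorem memSd01.abs_apply_le_one {d : ℕ} {A : Matrix (Fin d) (Fin d) ℝ} (hA : memSd01 A)
    (i j : Fin d) : |A i j| ≤ 1 := by
  have hdiag : ∀ k, A k k ≤ 1 := fun k => by simpa using hA.2.diag_nonneg (i := k)
  linarith [hA.1.two_mul_abs_apply_le i j, hdiag i, hdiag j]

theorem specNorm_eq_norm_toEuclideanCLM {d : ℕ} {A : Matrix (Fin d) (Fin d) ℝ}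
    (hA : A.IsHermitian) :
    specNorm A = ‖toEuclideanCLM (𝕜 := ℝ) A‖ := by
  set T := toEuclideanCLM (𝕜 := ℝ) A
  have hσ : spectrum ℝ T = spectrum ℝ A := AlgEquiv.spectrum_eq (toEuclideanCLM (𝕜 := ℝ)) A
  have hρ : spectralRadius ℝ T = ‖T‖₊ :=
    T.spectralRadius_eq_nnnorm (hA.isSelfAdjoint.map (toEuclideanCLM (𝕜 := ℝ)))
  have hfin : (spectrum ℝ A).Finite := Matrix.finite_real_spectrum
  rcases (spectrum ℝ A).eq_empty_or_nonempty with hemp | hne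
  · rw [spectralRadius, hσ, hemp] at hρ
    simp only [Set.mem_empty_iff_false, iSup_false, iSup_const] at hρ
    have : ‖T‖ = 0 := by simpa using hρ.symm
    simp [this, specNorm, lmax, lmin, hemp]
  have hle : ∀ x ∈ spectrum ℝ A, |x| ≤ ‖T‖ := fun x hx => by
    have : (‖x‖₊ : ENNReal) ≤ spectralRadius ℝ T :=
      le_iSup₂ (f := fun k (_ : k ∈ spectrum ℝ T) => (‖k‖₊ : ENNReal)) x (hσ ▸ hx)
    rw [hρ, ENNReal.coe_le_coe, ← NNReal.coe_le_coe, coe_nnnorm, coe_nnnorm] at this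
    rwa [← Real.norm_eq_abs]
  obtain ⟨k, hk, hkT⟩ := spectrum.exists_nnnorm_eq_spectralRadius_of_nonempty (hσ ▸ hne)
  rw [hρ, ENNReal.coe_inj] at hkT
  have hkT' : |k| = ‖T‖ := by rw [← Real.norm_eq_abs, ← coe_nnnorm, hkT, coe_nnnorm]
  rw [hσ] at hk
  apply le_antisymm
  · refine max_le (Real.sSup_le (fun x hx => (le_abs_self x).trans (hle x hx)) (norm_nonneg _)) ?_
    rw [neg_le]
    exact Real.le_sInf (fun x hx => neg_le.1 ((neg_le_abs x).trans (hle x hx))) (by simp)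
  · rw [← hkT', specNorm, abs_le', le_max_iff, le_max_iff, neg_le_neg_iff]
    exact ⟨Or.inl (le_csSup hfin.bddAbove hk), Or.inr (csInf_le hfin.bddBelow hk)⟩

theorem specNorm_nonneg {d : ℕ} {A : Matrix (Fin d) (Fin d) ℝ} (hA : A.IsHermitian) :
    0 ≤ specNorm A :=
  specNorm_eq_norm_toEuclideanCLM hA ▸ norm_nonneg _

theorem Filter.Tendsto.specNorm {ι : Type*} {l : Filter ι} {d : ℕ}
    {A : ι → Matrix (Fin d) (Fin d) ℝ} {B : Matrix (Fin d) (Fin d) ℝ}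
    (hA : ∀ i, (A i).IsHermitian) (hB : B.IsHermitian) (h : Tendsto A l (𝓝 B)) :
    Tendsto (fun i => _root_.specNorm (A i)) l (𝓝 (_root_.specNorm B)) := by
  have hT : Continuous (toEuclideanCLM (n := Fin d) (𝕜 := ℝ)) :=
    (toEuclideanCLM (n := Fin d) (𝕜 := ℝ)).toAlgEquiv.toLinearMap.continuous_of_finiteDimensional
  simp only [specNorm_eq_norm_toEuclideanCLM, hA, hB]
  exact ((hT.tendsto B).comp h).norm

theorem tendsto_natCast_div_natCast_sub_one :
    Tendsto (fun n : ℕ => (n : ℝ) / (n - 1)) atTop (𝓝 1) := by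
  simpa [sub_eq_add_neg] using tendsto_natCast_div_add_atTop (-1 : ℝ)

section SampleVariance

variable {R : Type*} [Ring R]

theorem sum_range_sum_Ioo_sub_sq (x : ℕ → R) (n : ℕ) :
    ∑ i ∈ range n, ∑ j ∈ Ioo i n, (x i - x j) ^ 2
      = n • ∑ i ∈ range n, x i ^ 2 - (∑ i ∈ range n, x i) ^ 2 := by
  induction n with
  | zero => simp
  | succ n ih =>
    have hIoo : ∀ i ∈ range n, Ioo i (n + 1) = insert n (Ioo i n) := fun i hi => by
      rw [Ioo_insert_right (mem_range.1 hi), ← Order.succ_eq_add_one, Ioo_succ_right_eq_Ioc]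
    have hlast : Ioo n (n + 1) = ∅ := by
      rw [← Order.succ_eq_add_one, Ioo_succ_right_eq_Ioc, Ioc_self]
    have hsplit : ∑ i ∈ range (n + 1), ∑ j ∈ Ioo i (n + 1), (x i - x j) ^ 2
        = ∑ i ∈ range n, ∑ j ∈ Ioo i n, (x i - x j) ^ 2 + ∑ i ∈ range n, (x i - x n) ^ 2 := by
      rw [sum_range_succ, hlast, sum_empty, add_zero, ← sum_add_distrib]
      refine sum_congr rfl fun i hi => ?_
      rw [hIoo i hi, sum_insert (by simp), add_comm]
    simp only [sq, sub_mul, mul_sub] at hsplit ih ⊢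
    rw [hsplit, ih, sum_range_succ, sum_range_succ, succ_nsmul]
    simp only [sum_sub_distrib, ← sum_mul, ← mul_sum, sum_const, card_range, add_mul, mul_add,
      smul_add, smul_mul_assoc]
    abel

variable [Algebra ℝ R]

noncomputable def sampleVariance (x : ℕ → R) (n : ℕ) : R :=
  ((n : ℝ) * ((n : ℝ) - 1))⁻¹ • ∑ i ∈ range n, ∑ j ∈ Ioo i n, (x i - x j) ^ 2

theorem sampleVariance_sub_const (x : ℕ → R) (c : R) :
    sampleVariance (fun i => x i - c) = sampleVariance x := by
  funext n
  simp only [sampleVariance, sub_sub_sub_cancel_right]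

theorem IsSelfAdjoint.sampleVariance [StarRing R] [StarModule ℝ R] {x : ℕ → R}
    (hx : ∀ i, IsSelfAdjoint (x i)) (n : ℕ) : IsSelfAdjoint (sampleVariance x n) :=
  (IsSelfAdjoint.all _).smul <| isSelfAdjoint_sum _ fun i _ => isSelfAdjoint_sum _ fun j _ =>
    ((hx i).sub (hx j)).pow 2

theorem sampleVariance_eq_smul (x : ℕ → R) {n : ℕ} (hn : 2 ≤ n) :
    sampleVariance x n = ((n : ℝ) / (n - 1)) •
      ((n : ℝ)⁻¹ • ∑ i ∈ range n, x i ^ 2 - ((n : ℝ)⁻¹ • ∑ i ∈ range n, x i) ^ 2) := by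
  have hn0 : (n : ℝ) ≠ 0 := by positivity
  have hn1 : (n : ℝ) - 1 ≠ 0 := by
    have : (2 : ℝ) ≤ n := by exact_mod_cast hn
    linarith
  rw [sampleVariance, sum_range_sum_Ioo_sub_sq, ← Nat.cast_smul_eq_nsmul ℝ, smul_pow, smul_sub,
    smul_sub, smul_smul, smul_smul, smul_smul]
  congr 2 <;> field_simp

theorem tendsto_sampleVariance [TopologicalSpace R] [IsTopologicalRing R] [ContinuousSMul ℝ R]
    {x : ℕ → R} {m q : R}
    (hm : Tendsto (fun n : ℕ => (n : ℝ)⁻¹ • ∑ i ∈ range n, x i) atTop (𝓝 m))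
    (hq : Tendsto (fun n : ℕ => (n : ℝ)⁻¹ • ∑ i ∈ range n, x i ^ 2) atTop (𝓝 q)) :
    Tendsto (sampleVariance x) atTop (𝓝 (q - m ^ 2)) := by
  have hlim := tendsto_natCast_div_natCast_sub_one.smul (hq.sub (hm.pow 2))
  rw [one_smul] at hlim
  exact hlim.congr' ((eventually_ge_atTop 2).mono fun n hn => (sampleVariance_eq_smul x hn).symm)

end SampleVariance

-- The deviation term `D_n` of the paper, with `‖V̂_n‖` replaced by `W` and `d` by `D`.
noncomputable def bernsteinDeviation (D α W : ℝ) (n : ℕ) : ℝ :=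
  Real.sqrt (2 * Real.log ((n : ℝ) * D / (((n : ℝ) - 1) * α)) / n)
    * (Real.sqrt W
      + min (Real.sqrt (Real.log (2 * (n : ℝ) * D / α) / (2 * n * W)))
        ((2 * Real.log (2 * (n : ℝ) * D / α) / n) ^ ((1 : ℝ) / 4)))
    + Real.log ((n : ℝ) * D / (((n : ℝ) - 1) * α)) / (3 * n)

theorem tendsto_log_natCast_mul_div_sub_one_mul {D α : ℝ} (hD : D ≠ 0) (hα : α ≠ 0) :
    Tendsto (fun n : ℕ => Real.log ((n : ℝ) * D / (((n : ℝ) - 1) * α))) atTop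
      (𝓝 (Real.log (D / α))) := by
  have harg := tendsto_natCast_div_natCast_sub_one.mul_const (D / α)
  rw [one_mul] at harg
  have h := (Real.continuousAt_log (div_ne_zero hD hα)).tendsto.comp harg
  exact h.congr fun n => by simp only [Function.comp_apply, mul_div_mul_comm]

theorem tendsto_log_mul_natCast_div_natCast {c : ℝ} (hc : 0 < c) :
    Tendsto (fun n : ℕ => Real.log (c * n) / n) atTop (𝓝 0) := by
  have h := (Real.tendsto_pow_log_div_mul_add_atTop c⁻¹ 0 1 (inv_ne_zero hc.ne')).comp
    (tendsto_natCast_atTop_atTop.const_mul_atTop hc)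
  refine h.congr fun n => ?_
  simp [inv_mul_cancel_left₀ hc.ne']

theorem tendsto_sqrt_natCast_mul_bernsteinDeviation {D α v : ℝ} (hD : 0 < D) (hα : 0 < α)
    (hv : 0 ≤ v) {W : ℕ → ℝ} (hW : Tendsto W atTop (𝓝 v)) :
    Tendsto (fun n : ℕ => Real.sqrt n * bernsteinDeviation D α (W n) n) atTop
      (𝓝 (Real.sqrt (2 * Real.log (D / α) * v))) := by
  set L : ℕ → ℝ := fun n => Real.log ((n : ℝ) * D / (((n : ℝ) - 1) * α))
  set R : ℕ → ℝ := fun n => 2 * Real.log (2 * (n : ℝ) * D / α) / n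
  have hL : Tendsto L atTop (𝓝 (Real.log (D / α))) :=
    tendsto_log_natCast_mul_div_sub_one_mul hD.ne' hα.ne'
  have hR : Tendsto R atTop (𝓝 0) := by
    have h := (tendsto_log_mul_natCast_div_natCast (by positivity : 0 < 2 * D / α)).const_mul 2
    rw [mul_zero] at h
    refine h.congr fun n => ?_
    simp only [R, mul_div_assoc]
    congr 3
    ring
  have hroot : Tendsto (fun n => R n ^ ((1 : ℝ) / 4)) atTop (𝓝 0) := by
    have h := (Real.continuousAt_rpow_const 0 ((1 : ℝ) / 4) (Or.inr (by norm_num))).tendsto.comp hR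
    rwa [Real.zero_rpow (by norm_num)] at h
  have hmin : Tendsto (fun n : ℕ => min (Real.sqrt (Real.log (2 * (n : ℝ) * D / α) / (2 * n * W n)))
      (R n ^ ((1 : ℝ) / 4))) atTop (𝓝 0) := by
    have hlow : Tendsto (fun n => min 0 (R n ^ ((1 : ℝ) / 4))) atTop (𝓝 0) := by
      simpa using (tendsto_const_nhds (x := (0 : ℝ))).min hroot
    exact tendsto_of_tendsto_of_tendsto_of_le_of_le hlow hroot
      (fun n => min_le_min_right _ (Real.sqrt_nonneg _)) (fun n => min_le_right _ _)
  have hlast : Tendsto (fun n : ℕ => L n / (3 * Real.sqrt n)) atTop (𝓝 0) :=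
    hL.div_atTop <| (Real.tendsto_sqrt_atTop.comp tendsto_natCast_atTop_atTop).const_mul_atTop
      (by norm_num)
  have hlim := ((hL.const_mul 2).sqrt.mul (hW.sqrt.add hmin)).add hlast
  rw [add_zero, add_zero, ← Real.sqrt_mul' _ hv] at hlim
  refine hlim.congr' <| (eventually_gt_atTop 0).mono fun n hn => ?_
  have hn' : (0 : ℝ) < n := by exact_mod_cast hn
  have hsq : Real.sqrt n * Real.sqrt n = n := Real.mul_self_sqrt hn'.le
  have hroot_mul : Real.sqrt n * Real.sqrt (2 * L n / n) = Real.sqrt (2 * L n) := by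
    rw [← Real.sqrt_mul hn'.le, mul_div_cancel₀ _ hn'.ne']
  have h3n : 3 * (n : ℝ) = 3 * Real.sqrt n * Real.sqrt n := by rw [mul_assoc, hsq]
  show _ = Real.sqrt n * (Real.sqrt (2 * L n / n) * (Real.sqrt (W n) + min _ (R n ^ ((1 : ℝ) / 4)))
    + L n / (3 * n))
  rw [mul_add (Real.sqrt n), ← mul_assoc, hroot_mul, h3n]
  field_simp

instance matBorelSpace {d : ℕ} : BorelSpace (Matrix (Fin d) (Fin d) ℝ) :=
  inferInstanceAs (BorelSpace (Fin d → Fin d → ℝ))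

section StrongLaw

variable {Ω E : Type*} [MeasurableSpace Ω] {μ : Measure Ω} [IsProbabilityMeasure μ]
  [TopologicalSpace E] [MeasurableSpace E] [OpensMeasurableSpace E]

theorem integrable_comp_of_isCompact {K : Set E} {Y : Ω → E} (hY : Measurable Y) (hK : IsCompact K)
    (hYK : ∀ ω, Y ω ∈ K) {f : E → ℝ} (hf : Continuous f) : Integrable (fun ω => f (Y ω)) μ := by
  obtain ⟨C, hC⟩ := hK.exists_bound_of_continuousOn hf.continuousOn
  exact .of_bound (hf.measurable.comp hY).aestronglyMeasurable C
    (ae_of_all _ fun ω => hC _ (hYK ω))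

theorem ae_tendsto_average_of_isCompact {K : Set E} {X : ℕ → Ω → E} (hMeas : ∀ i, Measurable (X i))
    (hIndep : Pairwise fun i j => IndepFun (X i) (X j) μ)
    (hIdent : ∀ i, IdentDistrib (X i) (X 0) μ μ) (hK : IsCompact K) (hXK : ∀ i ω, X i ω ∈ K)
    {f : E → ℝ} (hf : Continuous f) :
    ∀ᵐ ω ∂μ, Tendsto (fun n : ℕ => (∑ i ∈ range n, f (X i ω)) / n) atTop
      (𝓝 (∫ ω, f (X 0 ω) ∂μ)) :=
  strong_law_ae_real _ (integrable_comp_of_isCompact (hMeas 0) hK (hXK 0) hf)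
    (fun _ _ hij => (hIndep hij).comp hf.measurable hf.measurable)
    (fun i => (hIdent i).comp hf.measurable)

theorem ae_tendsto_smul_sum_of_isCompact {d : ℕ} {X : ℕ → Ω → Matrix (Fin d) (Fin d) ℝ}
    {K : Set (Matrix (Fin d) (Fin d) ℝ)} (hMeas : ∀ i, Measurable (X i))
    (hIndep : Pairwise fun i j => IndepFun (X i) (X j) μ)
    (hIdent : ∀ i, IdentDistrib (X i) (X 0) μ μ) (hK : IsCompact K) (hXK : ∀ i ω, X i ω ∈ K)
    {g : Matrix (Fin d) (Fin d) ℝ → Matrix (Fin d) (Fin d) ℝ} (hg : Continuous g) :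
    ∀ᵐ ω ∂μ, Tendsto (fun n : ℕ => (n : ℝ)⁻¹ • ∑ i ∈ range n, g (X i ω)) atTop
      (𝓝 (mIntegral μ fun ω => g (X 0 ω))) := by
  have hentry : ∀ a b, ∀ᵐ ω ∂μ, Tendsto (fun n : ℕ => (∑ i ∈ range n, g (X i ω) a b) / n)
      atTop (𝓝 (∫ ω, g (X 0 ω) a b ∂μ)) := fun a b =>
    ae_tendsto_average_of_isCompact (f := fun A => g A a b) hMeas hIndep hIdent hK hXK
      (hg.matrix_elem a b)
  filter_upwards [ae_all_iff.2 fun a => ae_all_iff.2 (hentry a)] with ω hω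
  refine tendsto_pi_nhds.2 fun a => tendsto_pi_nhds.2 fun b => (hω a b).congr fun n => ?_
  simp [Matrix.sum_apply, div_eq_inv_mul]

end StrongLaw

theorem mIntegral_sub_const {Ω : Type*} [MeasurableSpace Ω] {μ : Measure Ω}
    [IsProbabilityMeasure μ] {d : ℕ} {X : Ω → Matrix (Fin d) (Fin d) ℝ} (hX : mIntegrable μ X)
    (A : Matrix (Fin d) (Fin d) ℝ) : mIntegral μ (fun ω => X ω - A) = mIntegral μ X - A := by
  ext a b
  simp [mIntegral, integral_sub (hX a b) (integrable_const _)]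

/-- **Sharpness of the classical-sample-variance matrix empirical Bernstein inequality.**
For an i.i.d. sequence of `S_d^{[0,1]}`-valued random matrices with mean `M` and variance
`V`, the deviation term `D_n` of the classical-sample-variance matrix empirical Bernstein
inequality satisfies `√n · D_n → √(2 log(d/α) ‖V‖)` almost surely. -/
theorem matrix_empirical_bernstein_one_classical_sharp
    {Ω : Type*} [m0 : MeasurableSpace Ω] (μ : Measure Ω) [IsProbabilityMeasure μ]
    {d : ℕ} (hd : 0 < d)
    (X : ℕ → Ω → Matrix (Fin d) (Fin d) ℝ)
    (hMeas : ∀ i, Measurable (X i))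
    (hIndep : iIndepFun (m := fun _ : ℕ => matMS) X μ)
    (hIdent : ∀ i, IdentDistrib (X i) (X 0) μ μ)
    (hBdd : ∀ i, ∀ ω, memSd01 (X i ω))
    (M V : Matrix (Fin d) (Fin d) ℝ)
    (hMean : mIntegral μ (X 0) = M)
    (hVar : mIntegral μ (fun ω => (X 0 ω - M) ^ 2) = V)
    (α : ℝ) (hα : α ∈ Set.Ioo (0 : ℝ) 1) :
    ∀ᵐ ω ∂μ, Tendsto (fun n : ℕ =>
        Real.sqrt n *
          (Real.sqrt (2 * Real.log ((n : ℝ) * d / (((n : ℝ) - 1) * α)) / n)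
            * (Real.sqrt (specNorm (((n : ℝ) * ((n : ℝ) - 1))⁻¹ •
                  ∑ i ∈ Finset.range n, ∑ j ∈ Finset.Ioo i n, (X i ω - X j ω) ^ 2))
              + min
                  (Real.sqrt (Real.log (2 * (n : ℝ) * d / α)
                    / (2 * n * specNorm (((n : ℝ) * ((n : ℝ) - 1))⁻¹ •
                        ∑ i ∈ Finset.range n, ∑ j ∈ Finset.Ioo i n, (X i ω - X j ω) ^ 2))))
                  ((2 * Real.log (2 * (n : ℝ) * d / α) / n) ^ ((1 : ℝ) / 4)))
          + Real.log ((n : ℝ) * d / (((n : ℝ) - 1) * α)) / (3 * n)))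
      atTop (nhds (Real.sqrt (2 * Real.log (d / α) * specNorm V))) := by
  set K : Set (Matrix (Fin d) (Fin d) ℝ) := Set.univ.pi fun _ => Set.univ.pi fun _ => Set.Icc (-1) 1
  have hK : IsCompact K := isCompact_univ_pi fun _ => isCompact_univ_pi fun _ => isCompact_Icc
  have hXK : ∀ i ω, X i ω ∈ K := fun i ω => Set.mem_univ_pi.2 fun a => Set.mem_univ_pi.2 fun b =>
    abs_le.1 ((hBdd i ω).abs_apply_le_one a b)
  have hpair : Pairwise fun i j => IndepFun (X i) (X j) μ := fun i j hij => hIndep.indepFun hij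
  have hint : mIntegrable μ (X 0) := fun a b =>
    integrable_comp_of_isCompact (hMeas 0) hK (hXK 0) (continuous_id.matrix_elem a b)
  have hcentered : mIntegral μ (fun ω => X 0 ω - M) = 0 := by
    rw [mIntegral_sub_const hint, hMean, sub_self]
  filter_upwards [ae_tendsto_smul_sum_of_isCompact hMeas hpair hIdent hK hXK
      (g := fun A => A - M) (by fun_prop),
    ae_tendsto_smul_sum_of_isCompact hMeas hpair hIdent hK hXK
      (g := fun A => (A - M) ^ 2) (by fun_prop)] with ω hmean hsq
  rw [hcentered] at hmean
  rw [hVar] at hsq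
  have hVhat : Tendsto (sampleVariance (X · ω)) atTop (𝓝 V) := by
    have h := tendsto_sampleVariance hmean hsq
    rwa [sampleVariance_sub_const (X · ω), zero_pow two_ne_zero, sub_zero] at h
  have hVhatH : ∀ n, (sampleVariance (X · ω) n).IsHermitian :=
    IsSelfAdjoint.sampleVariance fun i => (hBdd i ω).1.isHermitian
  have hVH : V.IsHermitian :=
    (isClosed_eq continuous_id.matrix_conjTranspose continuous_id).mem_of_tendsto hVhat
      (Eventually.of_forall hVhatH)
  exact tendsto_sqrt_natCast_mul_bernsteinDeviation (Nat.cast_pos.2 hd) hα.1 (specNorm_nonneg hVH)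
    (hVhat.specNorm hVhatH hVH)
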